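/- Let k ≥ 1 and let Σ be a normal derivation of the atom C in natural deduction for M→ whose only open assumption formula is ξ_k (possibly occurring several times). Then every open assumption occurrence of ξ_k in Σ is the major premise of an →-elimination rule. -/

import Mathlib

/-- Formulas of purely implicational logic, built from atoms (numbered by `ℕ`)
by the single connective `→` (`impl`). -/
inductive Fm : Type
  | atom : ℕ → Fm
  | impl : Fm → Fm → Fm
deriving DecidableEq

/-- χ[X,Y] = (((X → Y) → X) → X) → Y. -/
def chi (X Y : Fm) : Fm := (((X.impl Y).impl X).impl X).impl Y

/-- The atom `Fm.atom 0` is C, and `Fm.atom k` is D_k for k ≥ 1.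
ξ₁ = χ[D₁, C] and ξ_{i+1} = χ[D_{i+1}, ξ_i]  (the value at 0 is irrelevant). -/
def xi : ℕ → Fm
  | 0 => chi (.atom 1) (.atom 0)
  | 1 => chi (.atom 1) (.atom 0)
  | n + 2 => chi (.atom (n + 2)) (xi (n + 1))

/-- φ_n = ξ_n → C. -/
def phi (n : ℕ) : Fm := (xi n).impl (.atom 0)

/-- Natural deduction derivations for M→, indexed by the multiset of open
assumption occurrences and the conclusion.  `assume a` is a one-occurrence
assumption of `a`; `intro n` is →-introduction discharging exactly `n`
occurrences of the assumption `a`; `elim` is →-elimination whose second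
premise (the implication) is the major premise. -/
inductive Deriv : Multiset Fm → Fm → Type
  | assume (a : Fm) : Deriv {a} a
  | intro {Γ : Multiset Fm} {a b : Fm} (n : ℕ)
      (d : Deriv (Γ + Multiset.replicate n a) b) : Deriv Γ (a.impl b)
  | elim {Γ Δ : Multiset Fm} {a b : Fm}
      (minor : Deriv Γ a) (major : Deriv Δ (a.impl b)) : Deriv (Γ + Δ) b

/-- The last rule of the derivation is an →-introduction. -/
def Deriv.isIntro : ∀ {Γ b}, Deriv Γ b → Prop
  | _, _, .intro _ _ => True
  | _, _, _ => False

/-- A derivation is normal if no formula occurrence is both the conclusion of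
an →-introduction and the major premise of an →-elimination. -/
def Deriv.normal : ∀ {Γ b}, Deriv Γ b → Prop
  | _, _, .assume _ => True
  | _, _, .intro _ d => d.normal
  | _, _, .elim minor major => minor.normal ∧ major.normal ∧ ¬ major.isIntro

/-- Number of assumption occurrences (leaves) of the formula `a` in a
derivation (whether discharged in the derivation or not). -/
def Deriv.countA (a : Fm) : ∀ {Γ b}, Deriv Γ b → ℕ
  | _, _, .assume c => if c = a then 1 else 0
  | _, _, .intro _ d => Deriv.countA a d
  | _, _, .elim minor major => Deriv.countA a minor + Deriv.countA a major

/-- `Deriv.nonMajorCount a d maj` counts the assumption occurrences (leaves) of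
the formula `a` in `d` that are NOT in major-premise position of an
→-elimination; the flag `maj` records whether the root of `d` itself sits in
major-premise position. -/
def Deriv.nonMajorCount (a : Fm) : ∀ {Γ b}, Deriv Γ b → Bool → ℕ
  | _, _, .assume c, maj => if c = a ∧ maj = false then 1 else 0
  | _, _, .intro _ d, _ => Deriv.nonMajorCount a d false
  | _, _, .elim minor major, _ =>
      Deriv.nonMajorCount a minor false + Deriv.nonMajorCount a major true

/-! In a normal derivation the major premise of an elimination is not an introduction, so following
major premises upwards reaches a leaf: it is a subformula of an open assumption, hence of `ξ_k`.
A leaf `ξ_k` standing as a minor premise, or as the premise of an introduction, would therefore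
make `ξ_k → b` or `b → ξ_k` a subformula of `ξ_k`, which is impossible by size; and the root is
`C ≠ ξ_k`. So every leaf `ξ_k` outside major-premise position is discharged. -/

inductive Fm.Subformula : Fm → Fm → Prop
  | refl (t : Fm) : Fm.Subformula t t
  | implL {s a b : Fm} : Fm.Subformula s a → Fm.Subformula s (a.impl b)
  | implR {s a b : Fm} : Fm.Subformula s b → Fm.Subformula s (a.impl b)

def Fm.size : Fm → ℕ
  | .atom _ => 1
  | .impl a b => a.size + b.size + 1

namespace Fm.Subformula

theorem trans {s t u : Fm} (hst : Subformula s t) (htu : Subformula t u) : Subformula s u := by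
  induction htu with
  | refl => exact hst
  | implL _ ih => exact implL ih
  | implR _ ih => exact implR ih

theorem left {a b u : Fm} (h : Subformula (a.impl b) u) : Subformula a u :=
  (implL (refl a)).trans h

theorem right {a b u : Fm} (h : Subformula (a.impl b) u) : Subformula b u :=
  (implR (refl b)).trans h

theorem size_le {s t : Fm} (h : Subformula s t) : s.size ≤ t.size := by
  induction h with
  | refl => exact le_rfl
  | implL _ ih | implR _ ih => simp only [Fm.size]; omega

theorem not_impl_left (a b : Fm) : ¬ Subformula (a.impl b) a := fun h => by
  have := h.size_le
  simp only [Fm.size] at this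
  omega

theorem not_impl_right (a b : Fm) : ¬ Subformula (a.impl b) b := fun h => by
  have := h.size_le
  simp only [Fm.size] at this
  omega

end Fm.Subformula

open Fm

theorem Deriv.exists_subformula_of_not_isIntro {Γ : Multiset Fm} {b : Fm} (d : Deriv Γ b)
    (hd : d.normal) (hi : ¬ d.isIntro) : ∃ γ ∈ Γ, Subformula b γ := by
  induction d with
  | assume c => exact ⟨c, Multiset.mem_singleton_self c, .refl c⟩
  | intro => exact absurd trivial hi
  | elim _ major _ ih =>
    obtain ⟨γ, hγ, hbγ⟩ := ih hd.2.1 hd.2.2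
    exact ⟨γ, Multiset.mem_add.mpr (Or.inr hγ), hbγ.right⟩

/-- `Γ.count a` counts the open leaves `a`, so the inequality says that all leaves `a` outside
major-premise position (and outside the root, when `maj = true`) are discharged. -/
theorem Deriv.nonMajorCount_add_count_le_countA (a : Fm) {Γ : Multiset Fm} {b : Fm}
    (d : Deriv Γ b) (maj : Bool) (hd : d.normal) (hΓ : ∀ γ ∈ Γ, Subformula γ a)
    (hb : Subformula b a) (hba : b = a → maj = true) :
    d.nonMajorCount a maj + Γ.count a ≤ d.countA a := by
  induction d generalizing maj with
  | assume c =>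
    by_cases hc : c = a
    · subst hc
      simp [nonMajorCount, countA, hba rfl]
    · simp [nonMajorCount, countA, hc, Ne.symm hc]
  | @intro Γ a' b' n d ih =>
    have hb'a : b' ≠ a := by rintro rfl; exact Subformula.not_impl_right _ _ hb
    have hΓ' : ∀ γ ∈ Γ + Multiset.replicate n a', Subformula γ a := by
      intro γ hγ
      rcases Multiset.mem_add.mp hγ with hγ | hγ
      · exact hΓ γ hγ
      · exact Multiset.eq_of_mem_replicate hγ ▸ hb.left
    have := ih false hd hΓ' hb.right (fun h => absurd h hb'a)
    rw [Multiset.count_add] at this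
    simp only [nonMajorCount, countA]
    omega
  | @elim Γ Δ c b' minor major ihm ihM =>
    obtain ⟨hminor, hmajor, hmajor_not_intro⟩ := hd
    have hΓm : ∀ γ ∈ Γ, Subformula γ a := fun γ hγ => hΓ γ (Multiset.mem_add.mpr (Or.inl hγ))
    have hΓM : ∀ γ ∈ Δ, Subformula γ a := fun γ hγ => hΓ γ (Multiset.mem_add.mpr (Or.inr hγ))
    have hcb : Subformula (c.impl b') a := by
      obtain ⟨γ, hγ, hcbγ⟩ := major.exists_subformula_of_not_isIntro hmajor hmajor_not_intro
      exact hcbγ.trans (hΓM γ hγ)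
    have hca : c ≠ a := by rintro rfl; exact Subformula.not_impl_left _ _ hcb
    have := ihm false hminor hΓm hcb.left (fun h => absurd h hca)
    have := ihM true hmajor hΓM hcb (fun _ => rfl)
    simp only [nonMajorCount, countA, Multiset.count_add]
    omega

theorem Deriv.nonMajorCount_add_le_countA {a c : Fm} {m : ℕ}
    (d : Deriv (Multiset.replicate m a) c) (hd : d.normal) (hca : Subformula c a) (hne : c ≠ a) :
    d.nonMajorCount a false + m ≤ d.countA a := by
  have := d.nonMajorCount_add_count_le_countA a false hd
    (fun γ hγ => Multiset.eq_of_mem_replicate hγ ▸ .refl a) hca (fun h => absurd h hne)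
  rwa [Multiset.count_replicate_self] at this

theorem atom_zero_subformula_xi : ∀ n, Subformula (.atom 0) (xi n)
  | 0 | 1 => .implR (.refl _)
  | n + 2 => .implR (atom_zero_subformula_xi (n + 1))

theorem atom_ne_xi (i n : ℕ) : Fm.atom i ≠ xi n := by
  rcases n with _ | _ | n <;> simp [xi, chi]

theorem open_assumptions_are_major_general (k : ℕ) (m : ℕ)
    (d : Deriv (Multiset.replicate m (xi k)) (.atom 0)) (hd : d.normal) :
    Deriv.nonMajorCount (xi k) d false + m ≤ Deriv.countA (xi k) d :=
  d.nonMajorCount_add_le_countA hd (atom_zero_subformula_xi k) (atom_ne_xi 0 k)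

/-- let k ≥ 1 and let Σ be a normal derivation of the atom C whose
open assumptions are exactly m ≥ 1 occurrences of ξ_k.  Then every open
assumption occurrence of ξ_k in Σ is the major premise of an →-elimination:
the occurrences of ξ_k that are not major premises all lie among the
`countA - m` discharged occurrences, i.e. `nonMajorCount + m ≤ countA`. -/
theorem open_assumptions_are_major (k : ℕ) (hk : 1 ≤ k) (m : ℕ) (hm : 1 ≤ m)
    (d : Deriv (Multiset.replicate m (xi k)) (.atom 0)) (hd : d.normal) :
    Deriv.nonMajorCount (xi k) d false + m ≤ Deriv.countA (xi k) d :=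
  open_assumptions_are_major_general k m d hd
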